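/- arXiv:1906.09727 — 8 statements merged into one kernel-verified Lean document; each statement's English description precedes it below -/
import Mathlib

section
/- For every function h from subsets of [n] to the reals with h(∅)=0, h is a normal polymatroid (a non-negative linear combination of step functions h_W for W ⊊ [n]) if and only if its Möbius inverse g, defined by g(X) = Σ_{Y ⊇ X} (-1)^{|Y∖X|} h(Y), satisfies: Σ_{X ⊆ [n]} g(X) = 0, g([n]) ≥ 0, and g(X) ≤ 0 for all X ≠ [n]. -/
/-! If `∑ g = 0`, then `∑_{Y ⊇ X} g(Y) = -∑_{Y ⊉ X} g(Y) = ∑_{W ≠ [n]} (-g(W)) h_W(X)`. By Möbius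
inversion `h(X) = ∑_{Y ⊇ X} g(Y)`, so this writes `h` as a combination of step functions with
coefficients `-g(W)`. Conversely, for `h = ∑ c_W h_W` the function equal to `-c_X` at `X ≠ [n]` and
to `∑ c_W` at `[n]` sums to zero, so its superset sums are `h`, and hence it is the Möbius inverse
of `h`. -/

/-- The step function at `W`: `0` on subsets of `W`, `1` otherwise. -/
def stepFn {n : ℕ} (W X : Finset (Fin n)) : ℝ := if X ⊆ W then 0 else 1

/-- A normal polymatroid: a non-negative linear combination of step functions `h_W`, `W ⊊ [n]`. -/
def IsNormal {n : ℕ} (h : Finset (Fin n) → ℝ) : Prop :=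
  ∃ c : Finset (Fin n) → ℝ, (∀ W, 0 ≤ c W) ∧
    ∀ X, h X = ∑ W ∈ Finset.univ.filter (fun W => W ≠ Finset.univ), c W * stepFn W X

open Finset

namespace Finset

variable {α R : Type*} [DecidableEq α] [CommRing R]

theorem sum_Icc_neg_one_pow_card_sdiff_left (X Z : Finset α) :
    ∑ Y ∈ Icc X Z, (-1 : R) ^ #(Y \ X) = if X = Z then 1 else 0 := by
  by_cases hXZ : X ⊆ Z
  · have hdisj : ∀ V ∈ (Z \ X).powerset, Disjoint X V := fun V hV =>
      disjoint_sdiff.mono_right (mem_powerset.1 hV)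
    rw [Icc_eq_image_powerset hXZ,
      sum_image fun V hV W hW h => by
        simpa only [union_sdiff_cancel_left (hdisj V hV), union_sdiff_cancel_left (hdisj W hW)]
          using congrArg (· \ X) h,
      sum_congr rfl fun V hV => by rw [union_sdiff_cancel_left (hdisj V hV)]]
    have hpow := congrArg (Int.cast : ℤ → R) (sum_powerset_neg_one_pow_card (x := Z \ X))
    push_cast at hpow
    rw [hpow]
    exact if_congr (by rw [sdiff_eq_empty_iff_subset, Subset.antisymm_iff, and_iff_right hXZ])
      rfl rfl
  · rw [Icc_eq_empty hXZ, sum_empty, if_neg (by rintro rfl; exact hXZ subset_rfl)]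

theorem sum_Icc_neg_one_pow_card_sdiff_right (X Z : Finset α) :
    ∑ Y ∈ Icc X Z, (-1 : R) ^ #(Z \ Y) = if X = Z then 1 else 0 := by
  have hsign : ∀ Y ∈ Icc X Z, (-1 : R) ^ #(Z \ Y) = (-1) ^ #(Z \ X) * (-1) ^ #(Y \ X) := by
    intro Y hY
    obtain ⟨hXY, hYZ⟩ := mem_Icc.1 hY
    rw [← sdiff_union_sdiff_cancel hYZ hXY,
      card_union_of_disjoint (sdiff_disjoint.mono_right sdiff_subset), pow_add, mul_assoc,
      ← pow_add, ← two_mul, pow_mul, neg_one_sq, one_pow, mul_one]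
  rw [sum_congr rfl hsign, ← mul_sum, sum_Icc_neg_one_pow_card_sdiff_left]
  split_ifs with h
  · simp [h]
  · rw [mul_zero]

theorem sum_Ici_sum_Ici_comm {β M : Type*} [Preorder β] [LocallyFiniteOrder β]
    [LocallyFiniteOrderTop β] [AddCommMonoid M] (X : β) (F : β → β → M) :
    ∑ Y ∈ Ici X, ∑ Z ∈ Ici Y, F Y Z = ∑ Z ∈ Ici X, ∑ Y ∈ Icc X Z, F Y Z :=
  sum_comm' fun Y Z => by
    simp only [mem_Ici, mem_Icc]
    exact ⟨fun ⟨hXY, hYZ⟩ => ⟨⟨hXY, hYZ⟩, hXY.trans hYZ⟩, fun ⟨h, _⟩ => h⟩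

theorem sum_ite_sum_erase_neg_eq_zero {β M : Type*} [Fintype β] [DecidableEq β]
    [AddCommGroup M] (a : β) (c : β → M) :
    ∑ x, (if x = a then ∑ y ∈ univ.erase a, c y else -c x) = 0 := by
  rw [← add_sum_erase _ _ (mem_univ a), if_pos rfl,
    sum_congr rfl fun x hx => if_neg (ne_of_mem_erase hx), sum_neg_distrib, add_neg_cancel]

end Finset

section MoebiusInversion

variable {α R : Type*} [DecidableEq α] [Fintype α] [CommRing R]

def supersetSum (g : Finset α → R) (X : Finset α) : R := ∑ Y ∈ Ici X, g Y

def moebiusInv (h : Finset α → R) (X : Finset α) : R := ∑ Y ∈ Ici X, (-1) ^ #(Y \ X) * h Y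

theorem supersetSum_moebiusInv (h : Finset α → R) : supersetSum (moebiusInv h) = h := by
  ext X
  simp only [supersetSum, moebiusInv]
  rw [sum_Ici_sum_Ici_comm]
  simp only [← sum_mul, sum_Icc_neg_one_pow_card_sdiff_right, ite_mul, one_mul, zero_mul]
  rw [sum_ite_eq, if_pos (mem_Ici.2 le_rfl)]

theorem moebiusInv_supersetSum (g : Finset α → R) : moebiusInv (supersetSum g) = g := by
  ext X
  simp only [supersetSum, moebiusInv, mul_sum]
  rw [sum_Ici_sum_Ici_comm]
  simp only [← sum_mul, sum_Icc_neg_one_pow_card_sdiff_left, ite_mul, one_mul, zero_mul]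
  rw [sum_ite_eq, if_pos (mem_Ici.2 le_rfl)]

end MoebiusInversion

section StepFunctions

variable {n : ℕ}

theorem sum_mul_stepFn (s : Finset (Finset (Fin n))) (c : Finset (Fin n) → ℝ)
    (X : Finset (Fin n)) : ∑ W ∈ s, c W * stepFn W X = ∑ W ∈ s with ¬X ⊆ W, c W := by
  rw [sum_filter]
  exact sum_congr rfl fun W _ => by unfold stepFn; split_ifs <;> simp

theorem supersetSum_eq_sum_neg_mul_stepFn {g : Finset (Fin n) → ℝ} (hg : ∑ X, g X = 0)
    (X : Finset (Fin n)) :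
    supersetSum g X = ∑ W ∈ univ with W ≠ univ, -g W * stepFn W X := by
  have hne : filter (fun W => W ≠ univ ∧ ¬X ⊆ W) univ = filter (fun W => ¬X ⊆ W) univ :=
    filter_congr fun W _ => and_iff_right_of_imp fun hXW hW => hXW (hW ▸ subset_univ X)
  rw [sum_mul_stepFn, filter_filter, hne, sum_neg_distrib, eq_neg_iff_add_eq_zero, supersetSum,
    ← filter_le_eq_Ici]
  rwa [sum_filter_add_sum_filter_not]

theorem moebiusInv_sum_mul_stepFn (c : Finset (Fin n) → ℝ) :
    moebiusInv (fun X => ∑ W ∈ univ with W ≠ univ, c W * stepFn W X) =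
      fun X => if X = univ then ∑ W ∈ univ.erase univ, c W else -c X := by
  set g : Finset (Fin n) → ℝ := fun X => if X = univ then ∑ W ∈ univ.erase univ, c W else -c X
  have hh : (fun X => ∑ W ∈ univ with W ≠ univ, c W * stepFn W X) = supersetSum g := by
    ext X
    rw [supersetSum_eq_sum_neg_mul_stepFn (sum_ite_sum_erase_neg_eq_zero _ c)]
    exact sum_congr rfl fun W hW => by simp [(mem_filter.1 hW).2]
  rw [hh, moebiusInv_supersetSum]

end StepFunctions

theorem normal_iff_mobius_general {n : ℕ} (h : Finset (Fin n) → ℝ)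
    (g : Finset (Fin n) → ℝ)
    (hg : ∀ X, g X = ∑ Y ∈ Finset.univ.filter (fun Y => X ⊆ Y),
      (-1 : ℝ) ^ ((Y \ X).card) * h Y) :
    IsNormal h ↔
      ((∑ X : Finset (Fin n), g X) = 0 ∧ 0 ≤ g Finset.univ ∧
        ∀ X, X ≠ Finset.univ → g X ≤ 0) := by
  obtain rfl : g = moebiusInv h := funext fun X => by rw [hg, filter_le_eq_Ici]; rfl
  constructor
  · rintro ⟨c, hc, hh⟩
    obtain rfl : h = _ := funext hh
    rw [moebiusInv_sum_mul_stepFn]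
    refine ⟨sum_ite_sum_erase_neg_eq_zero _ c, ?_, fun X hX => by simp [hX, hc X]⟩
    simp only [↓reduceIte]
    exact sum_nonneg fun W _ => hc W
  · rintro ⟨hsum, -, hneg⟩
    refine ⟨fun W => if W = univ then 0 else -moebiusInv h W, fun W => ?_, fun X => ?_⟩
    · dsimp only
      split_ifs with hW
      exacts [le_rfl, neg_nonneg.2 (hneg W hW)]
    · calc h X = supersetSum (moebiusInv h) X := by rw [supersetSum_moebiusInv]
        _ = _ := supersetSum_eq_sum_neg_mul_stepFn hsum X
        _ = _ := sum_congr rfl fun W hW => by simp only [if_neg (mem_filter.1 hW).2]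

theorem normal_iff_mobius {n : ℕ} (h : Finset (Fin n) → ℝ) (h0 : h ∅ = 0)
    (g : Finset (Fin n) → ℝ)
    (hg : ∀ X, g X = ∑ Y ∈ Finset.univ.filter (fun Y => X ⊆ Y),
      (-1 : ℝ) ^ ((Y \ X).card) * h Y) :
    IsNormal h ↔
      ((∑ X : Finset (Fin n), g X) = 0 ∧ 0 ≤ g Finset.univ ∧
        ∀ X, X ≠ Finset.univ → g X ≤ 0) :=
  normal_iff_mobius_general h g hg
end

section
/- Let a_1, ..., a_n be non-negative real numbers and define h : 2^[n] → ℝ by h(X) = max{a_i : i ∈ X} (with h(∅) = 0). Then h is a normal polymatroid, i.e., a non-negative linear combination of step functions. -/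
open Finset

namespace IsNormal

variable {n : ℕ}

theorem zero : IsNormal (0 : Finset (Fin n) → ℝ) :=
  ⟨0, fun _ => le_rfl, fun _ => by simp⟩

theorem add {f g : Finset (Fin n) → ℝ} (hf : IsNormal f) (hg : IsNormal g) : IsNormal (f + g) := by
  obtain ⟨c, hc, hfc⟩ := hf
  obtain ⟨d, hd, hgd⟩ := hg
  exact ⟨c + d, fun W => add_nonneg (hc W) (hd W), fun X => by
    simp only [Pi.add_apply, hfc, hgd, add_mul, sum_add_distrib]⟩

theorem const_mul_stepFn {W : Finset (Fin n)} (hW : W ≠ univ) {t : ℝ} (ht : 0 ≤ t) :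
    IsNormal (fun X => t * stepFn W X) := by
  refine ⟨Pi.single W t, fun V => ?_, fun X => ?_⟩
  · rcases eq_or_ne V W with rfl | hV
    · simpa using ht
    · simp [hV]
  · rw [sum_eq_single_of_mem W (by simpa using hW) fun V _ hV => by simp [hV]]
    simp

end IsNormal

section maxOrZero

variable {ι : Type*}

noncomputable def maxOrZero (a : ι → ℝ) (X : Finset ι) : ℝ :=
  if hX : X.Nonempty then X.sup' hX a else 0

theorem maxOrZero_of_forall_eq_zero {a : ι → ℝ} {X : Finset ι} (h : ∀ i ∈ X, a i = 0) :
    maxOrZero a X = 0 := by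
  unfold maxOrZero
  split_ifs with hX
  · obtain ⟨j, hj⟩ := hX
    exact le_antisymm (sup'_le _ _ fun i hi => (h i hi).le) (h j hj ▸ le_sup' a hj)
  · rfl

theorem maxOrZero_truncate {a : ι → ℝ} {X : Finset ι} {t : ℝ} {j : ι} (hj : j ∈ X)
    (htj : t ≤ a j) : maxOrZero (fun i => max (a i - t) 0) X = maxOrZero a X - t := by
  have hX : X.Nonempty := ⟨j, hj⟩
  have hmono : Monotone fun x : ℝ => max (x - t) 0 := fun _ _ hxy =>
    max_le_max_right 0 (sub_le_sub_right hxy t)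
  simp only [maxOrZero, dif_pos hX]
  rw [← Function.comp_def (fun x : ℝ => max (x - t) 0) a,
    ← apply_sup'_eq_sup'_comp hX _ fun x y => hmono.map_sup x y]
  exact max_eq_left (sub_nonneg.2 (htj.trans (le_sup' a hj)))

end maxOrZero

theorem maxOrZero_eq_truncate_add_stepFn {n : ℕ} {a : Fin n → ℝ} {t : ℝ} (ht : 0 ≤ t)
    (hgap : ∀ i, a i ≠ 0 → t ≤ a i) (X : Finset (Fin n)) :
    maxOrZero a X = maxOrZero (fun i => max (a i - t) 0) X + t * stepFn {i | a i = 0} X := by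
  by_cases hXZ : X ⊆ ({i | a i = 0} : Finset (Fin n))
  · have hzero : ∀ i ∈ X, a i = 0 := fun i hi => by simpa using hXZ hi
    rw [maxOrZero_of_forall_eq_zero hzero, stepFn, if_pos hXZ,
      maxOrZero_of_forall_eq_zero fun i hi => by simp [hzero i hi, ht]]
    ring
  · obtain ⟨j, hjX, hjZ⟩ := not_subset.1 hXZ
    rw [maxOrZero_truncate hjX (hgap j (by simpa using hjZ)), stepFn, if_neg hXZ]
    ring

theorem isNormal_maxOrZero {n : ℕ} (a : Fin n → ℝ) (ha : ∀ i, 0 ≤ a i) :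
    IsNormal (maxOrZero a) := by
  induction hk : #{i | a i ≠ 0} using Nat.strong_induction_on generalizing a with
  | _ k ih =>
  obtain hS | hS := ({i | a i ≠ 0} : Finset (Fin n)).eq_empty_or_nonempty
  · have hzero : maxOrZero a = 0 :=
      funext fun X => maxOrZero_of_forall_eq_zero fun i _ => by
        simpa using filter_eq_empty_iff.1 hS (mem_univ i)
    exact hzero ▸ IsNormal.zero
  obtain ⟨i₀, hi₀, hmin⟩ := exists_min_image _ a hS
  have hi₀ : a i₀ ≠ 0 := by simpa using hi₀
  have hgap : ∀ i, a i ≠ 0 → a i₀ ≤ a i := fun i hi => hmin i (by simpa using hi)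
  have hsupp : #{i | max (a i - a i₀) 0 ≠ 0} < k := by
    refine hk ▸ card_lt_card ((ssubset_iff_of_subset fun i hi => ?_).2 ⟨i₀, by simpa, by simp⟩)
    have := ha i₀
    simp only [mem_filter, mem_univ, true_and, ne_eq, max_eq_right_iff, not_le, sub_pos] at hi ⊢
    linarith
  have hZ : ({i | a i = 0} : Finset (Fin n)) ≠ univ := fun h => by
    simpa [hi₀] using h.ge (mem_univ i₀)
  rw [show maxOrZero a = _ from funext (maxOrZero_eq_truncate_add_stepFn (ha i₀) hgap)]
  exact (ih _ hsupp _ (fun i => le_max_right _ _) rfl).add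
    (IsNormal.const_mul_stepFn hZ (ha i₀))

theorem max_is_normal {n : ℕ} (a : Fin n → ℝ) (ha : ∀ i, 0 ≤ a i) :
    IsNormal (fun X : Finset (Fin n) => if hX : X.Nonempty then X.sup' hX a else 0) :=
  isNormal_maxOrZero a ha
end

section
/- The parity function on three variables is not normal: the function h : 2^{1,2,3} → ℝ with h(∅)=0, h({1})=h({2})=h({3})=1, and h(S)=2 for all S with |S| ≥ 2, cannot be written as a non-negative linear combination of step functions h_W for W ⊊ {1,2,3}. -/
/-- The parity entropy function on three variables. -/
def hparity : Finset (Fin 3) → ℝ := fun S => if S = ∅ then 0 else if S.card = 1 then 1 else 2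

/-!
The Möbius inverse at `∅`, `h ↦ ∑_X (-1)^|X| h(X)`, is linear, vanishes on every step function
`h_W` with `∅ ≠ W ⊊ [n]` and sends `h_∅` to `-1`. Hence it is `≤ 0` on every normal function,
while on the parity function it equals `0 - 3·1 + 3·2 - 2 = 1`.
-/

open Finset

def moebiusAtEmpty {n : ℕ} (h : Finset (Fin n) → ℝ) : ℝ := ∑ X, (-1) ^ X.card * h X

lemma sum_neg_one_pow_card_subset {n : ℕ} (W : Finset (Fin n)) :
    ∑ X : Finset (Fin n), (if X ⊆ W then (-1 : ℝ) ^ X.card else 0) = if W = ∅ then 1 else 0 := by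
  rw [← sum_filter, show univ.filter (· ⊆ W) = W.powerset by ext; simp]
  exact_mod_cast sum_powerset_neg_one_pow_card

lemma moebiusAtEmpty_stepFn {n : ℕ} {W : Finset (Fin n)} (hW : W ≠ univ) :
    moebiusAtEmpty (stepFn W) = -if W = ∅ then 1 else 0 := by
  have hsplit : ∀ X : Finset (Fin n), (-1 : ℝ) ^ X.card * stepFn W X =
      (if X ⊆ univ then (-1) ^ X.card else 0) - if X ⊆ W then (-1) ^ X.card else 0 := by
    intro X
    by_cases hX : X ⊆ W <;> simp [stepFn, hX]
  obtain ⟨i, -⟩ := exists_of_ssubset (ssubset_univ_iff.mpr hW)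
  have huniv : (univ : Finset (Fin n)) ≠ ∅ := (univ_nonempty_iff.mpr ⟨i⟩).ne_empty
  simp only [moebiusAtEmpty, hsplit, sum_sub_distrib, sum_neg_one_pow_card_subset, huniv, if_false,
    zero_sub]

lemma IsNormal.moebiusAtEmpty_nonpos {n : ℕ} {h : Finset (Fin n) → ℝ} (hh : IsNormal h) :
    moebiusAtEmpty h ≤ 0 := by
  obtain ⟨c, hc, hsum⟩ := hh
  calc moebiusAtEmpty h
      = ∑ W ∈ univ.filter (· ≠ univ), c W * moebiusAtEmpty (stepFn W) := by
        simp only [moebiusAtEmpty, hsum, mul_sum]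
        rw [sum_comm]
        simp only [mul_left_comm]
    _ ≤ 0 := by
        refine sum_nonpos fun W hW => mul_nonpos_of_nonneg_of_nonpos (hc W) ?_
        rw [moebiusAtEmpty_stepFn (mem_filter.mp hW).2]
        split_ifs <;> norm_num

lemma moebiusAtEmpty_hparity : moebiusAtEmpty hparity = 1 := by
  have hcard : ∀ X : Finset (Fin 3), (-1 : ℝ) ^ X.card * hparity X =
      (-1) ^ X.card * if X.card = 0 then 0 else if X.card = 1 then 1 else 2 := by
    simp [hparity]
  simp only [moebiusAtEmpty, hcard]
  rw [← powerset_univ, sum_powerset_apply_card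
    (fun k => (-1 : ℝ) ^ k * if k = 0 then 0 else if k = 1 then 1 else 2)]
  norm_num [sum_range_succ]

theorem parity_not_normal : ¬ IsNormal hparity := fun hh => by
  linarith [hh.moebiusAtEmpty_nonpos, moebiusAtEmpty_hparity]
end

section
/- Let q > 0 and let E_1,...,E_k be non-negative linear combinations of unconditioned entropy terms, i.e., E_ℓ(h) = Σ_j d_{ℓ,j}·h(Y_{ℓ,j}) with d_{ℓ,j} ≥ 0. If the inequality q·h([n]) ≤ max_{ℓ∈[k]} E_ℓ(h) holds for every modular function h with non-negative singleton values, then it holds for every polymatroid h. -/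
/-- A polymatroid on `[n]`: non-negative, zero on `∅`, monotone and submodular. -/
def IsPolymatroid {n : ℕ} (h : Finset (Fin n) → ℝ) : Prop :=
  h ∅ = 0 ∧ (∀ X, 0 ≤ h X) ∧
    (∀ X Y : Finset (Fin n), h X ≤ h (X ∪ Y)) ∧
    (∀ X Y : Finset (Fin n), h (X ∪ Y) + h (X ∩ Y) ≤ h X + h Y)

/-- A modular function: `h(X) = Σ_{i ∈ X} h({i})`. -/
def IsModular {n : ℕ} (h : Finset (Fin n) → ℝ) : Prop :=
  ∀ X : Finset (Fin n), h X = ∑ i ∈ X, h {i}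

/-! The marginal gains `h(Iic i) - h(Iio i)` of a polymatroid `h` along the chain of initial
segments of `[n]` define a modular function `g` with non-negative weights (monotonicity),
`g([n]) = h([n])` (telescoping), and `g ≤ h` everywhere (submodularity: adding `i` to
`Y ∩ Iio i` gains at least as much as adding it to the larger set `Iio i`). Since all
coefficients `d_{ℓ,j}` are non-negative, the inequality for `g` transfers to `h`. -/

open Finset

section Chain

variable {α β : Type*} [LinearOrder α] [LocallyFiniteOrderBot α] [AddCommGroup β]

theorem Finset.sum_inter_Iic_sub_inter_Iio (h : Finset α → β) (Y : Finset α) :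
    ∑ i ∈ Y, (h (Y ∩ Iic i) - h (Y ∩ Iio i)) = h Y - h ∅ := by
  induction Y using Finset.induction_on_max with
  | empty => simp
  | insert a s hlt ih =>
    have ha : a ∉ s := fun has => lt_irrefl a (hlt a has)
    have htop_Iic : insert a s ∩ Iic a = insert a s :=
      inter_eq_left.2 fun x hx => by
        rcases mem_insert.1 hx with rfl | hx
        exacts [mem_Iic.2 le_rfl, mem_Iic.2 (hlt x hx).le]
    have htop_Iio : insert a s ∩ Iio a = s := by
      rw [insert_inter_of_notMem notMem_Iio_self,
        inter_eq_left.2 fun x hx => mem_Iio.2 (hlt x hx)]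
    have hbelow : ∀ i ∈ s, ∀ I : Finset α, I ⊆ Iic i → insert a s ∩ I = s ∩ I :=
      fun i hi I hI => insert_inter_of_notMem fun haI => (hlt i hi).not_ge (mem_Iic.1 (hI haI))
    have hrest : ∑ i ∈ s, (h (insert a s ∩ Iic i) - h (insert a s ∩ Iio i)) = h s - h ∅ := by
      rw [← ih]
      refine sum_congr rfl fun i hi => ?_
      rw [hbelow i hi _ subset_rfl, hbelow i hi _ Iio_subset_Iic_self]
    rw [sum_insert ha, htop_Iic, htop_Iio, hrest, sub_add_sub_cancel]

/-- The greedy vertex of the base polyhedron of `h` for the order of `α`. -/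
def chainModular (h : Finset α → β) (X : Finset α) : β :=
  ∑ i ∈ X, (h (Iic i) - h (Iio i))

theorem chainModular_univ [Fintype α] {h : Finset α → β} (h_empty : h ∅ = 0) :
    chainModular h univ = h univ := by
  rw [← sub_zero (h univ), ← h_empty, ← sum_inter_Iic_sub_inter_Iio]
  simp only [chainModular, univ_inter]

variable [PartialOrder β] [IsOrderedAddMonoid β] {h : Finset α → β}

theorem sub_le_sub_inter_of_submodular (hsub : ∀ X Y, h (X ∪ Y) + h (X ∩ Y) ≤ h X + h Y)
    {Y : Finset α} {i : α} (hi : i ∈ Y) :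
    h (Iic i) - h (Iio i) ≤ h (Y ∩ Iic i) - h (Y ∩ Iio i) := by
  have hunion : Y ∩ Iic i ∪ Iio i = Iic i := by
    ext x; simp only [mem_union, mem_inter, mem_Iic, mem_Iio]; grind
  have hinter : Y ∩ Iic i ∩ Iio i = Y ∩ Iio i := by
    rw [inter_assoc, inter_eq_right.2 Iio_subset_Iic_self]
  have key := hsub (Y ∩ Iic i) (Iio i)
  rw [hunion, hinter] at key
  exact sub_le_sub_iff.2 key

theorem chainModular_le (hsub : ∀ X Y, h (X ∪ Y) + h (X ∩ Y) ≤ h X + h Y) (h_empty : h ∅ = 0)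
    (Y : Finset α) : chainModular h Y ≤ h Y := by
  calc chainModular h Y ≤ ∑ i ∈ Y, (h (Y ∩ Iic i) - h (Y ∩ Iio i)) :=
        sum_le_sum fun i hi => sub_le_sub_inter_of_submodular hsub hi
    _ = h Y := by rw [sum_inter_Iic_sub_inter_Iio, h_empty, sub_zero]

theorem chainModular_singleton_nonneg (hmono : ∀ X Y, h X ≤ h (X ∪ Y)) (i : α) :
    0 ≤ chainModular h {i} := by
  rw [chainModular, sum_singleton, sub_nonneg, ← union_eq_right.2 Iio_subset_Iic_self]
  exact hmono _ _

end Chain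

theorem isModular_chainModular {n : ℕ} (h : Finset (Fin n) → ℝ) : IsModular (chainModular h) :=
  fun X => sum_congr rfl fun i _ => by rw [chainModular, sum_singleton]

theorem unconditioned_max_inequality_essentially_shannon_general {n k m : ℕ} (q : ℝ)
    (d : Fin k → Fin m → ℝ) (hd : ∀ ℓ j, 0 ≤ d ℓ j)
    (Ys : Fin k → Fin m → Finset (Fin n))
    (hmodular : ∀ h : Finset (Fin n) → ℝ, IsModular h → (∀ i : Fin n, 0 ≤ h {i}) →
      ∃ ℓ : Fin k, q * h Finset.univ ≤ ∑ j, d ℓ j * h (Ys ℓ j))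
    (h : Finset (Fin n) → ℝ) (hp : IsPolymatroid h) :
    ∃ ℓ : Fin k, q * h Finset.univ ≤ ∑ j, d ℓ j * h (Ys ℓ j) := by
  obtain ⟨h_empty, -, hmono, hsub⟩ := hp
  obtain ⟨ℓ, hℓ⟩ := hmodular (chainModular h) (isModular_chainModular h)
    (chainModular_singleton_nonneg hmono)
  refine ⟨ℓ, ?_⟩
  calc q * h univ = q * chainModular h univ := by rw [chainModular_univ h_empty]
    _ ≤ ∑ j, d ℓ j * chainModular h (Ys ℓ j) := hℓ
    _ ≤ ∑ j, d ℓ j * h (Ys ℓ j) :=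
        sum_le_sum fun j _ => mul_le_mul_of_nonneg_left (chainModular_le hsub h_empty _) (hd ℓ j)

/-- Unconditioned max-inequalities are essentially-Shannon: if
`q·h([n]) ≤ max_ℓ Σ_j d_{ℓ,j}·h(Y_{ℓ,j})` holds for all modular functions with non-negative
singleton values, then it holds for all polymatroids. -/
theorem unconditioned_max_inequality_essentially_shannon {n k m : ℕ} (q : ℝ) (hq : 0 < q)
    (d : Fin k → Fin m → ℝ) (hd : ∀ ℓ j, 0 ≤ d ℓ j)
    (Ys : Fin k → Fin m → Finset (Fin n))
    (hmodular : ∀ h : Finset (Fin n) → ℝ, IsModular h → (∀ i : Fin n, 0 ≤ h {i}) →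
      ∃ ℓ : Fin k, q * h Finset.univ ≤ ∑ j, d ℓ j * h (Ys ℓ j))
    (h : Finset (Fin n) → ℝ) (hp : IsPolymatroid h) :
    ∃ ℓ : Fin k, q * h Finset.univ ≤ ∑ j, d ℓ j * h (Ys ℓ j) :=
  unconditioned_max_inequality_essentially_shannon_general q d hd Ys hmodular h hp
end

section
/- For any polymatroid h on three variables X1, X2, X3, the following max-inequality holds: h({X1,X2,X3}) ≤ max(E1, E2, E3), where E1 = h({X1,X2}) + h({X1,X2}) - h({X1}), E2 = h({X2,X3}) + h({X2,X3}) - h({X2}), and E3 = h({X1,X3}) + h({X1,X3}) - h({X3}). -/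
/-! Submodularity applied to the three pairs `{X1,X2}, {X2,X3}, {X1,X3}`, any two of which cover
all three variables and meet in a single one, gives `3 h(X1X2X3) ≤ E1 + E2 + E3`; the maximum
of `E1, E2, E3` is at least their average. -/

theorem le_max_of_three_mul_le_add {K : Type*} [Field K] [LinearOrder K] [IsStrictOrderedRing K]
    {x a b c : K} (h : 3 * x ≤ a + b + c) : x ≤ max (max a b) c := by
  by_contra! hlt
  simp only [max_lt_iff] at hlt
  linarith [hlt.1.1, hlt.1.2, hlt.2]

theorem cyclic_sup_add_inf_le_of_submodular {α : Type*} [Lattice α] {f : α → ℝ}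
    (hf : ∀ a b, f (a ⊔ b) + f (a ⊓ b) ≤ f a + f b) (a b c : α) :
    f (a ⊔ b) + f (b ⊔ c) + f (c ⊔ a) + (f (a ⊓ b) + f (b ⊓ c) + f (c ⊓ a)) ≤
      2 * (f a + f b + f c) := by
  linarith [hf a b, hf b c, hf c a]

/-- For any polymatroid on three variables `X1 = 0`, `X2 = 1`, `X3 = 2`:
`h(X1X2X3) ≤ max(E1, E2, E3)` where `E1 = h(X1X2) + h(X2|X1)` etc. -/
theorem vee_max_inequality (h : Finset (Fin 3) → ℝ) (hp : IsPolymatroid h) :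
    h Finset.univ ≤
      max (max (h {0, 1} + h {0, 1} - h {0}) (h {1, 2} + h {1, 2} - h {1}))
        (h {0, 2} + h {0, 2} - h {2}) := by
  obtain ⟨-, -, -, hsub⟩ := hp
  have key := cyclic_sup_add_inf_le_of_submodular hsub ({0, 1} : Finset (Fin 3)) {1, 2} {0, 2}
  simp only [show ({0, 1} ⊔ {1, 2} : Finset (Fin 3)) = Finset.univ by decide,
    show ({1, 2} ⊔ {0, 2} : Finset (Fin 3)) = Finset.univ by decide,
    show ({0, 2} ⊔ {0, 1} : Finset (Fin 3)) = Finset.univ by decide,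
    show ({0, 1} ⊓ {1, 2} : Finset (Fin 3)) = {1} by decide,
    show ({1, 2} ⊓ {0, 2} : Finset (Fin 3)) = {2} by decide,
    show ({0, 2} ⊓ {0, 1} : Finset (Fin 3)) = {0} by decide] at key
  apply le_max_of_three_mul_le_add
  linarith
end

section
/- Let P1 ⊆ D^X and P2 ⊆ D^Y be finite relations over attribute sets X and Y, and suppose P2 is totally uniform. Then |P1 ⋈ P2| ≤ |P1| · deg_{P2}(Y | X∩Y), where deg_{P2}(Y|Z) = |Π_{Z∪Y}(P2)| / |Π_Z(P2)| and ⋈ denotes the natural join. -/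
open Finset

/-- Restriction of a tuple to the attributes in `Z`. -/
def restr {ι D : Type*} (f : ι → D) (Z : Finset ι) : {v // v ∈ Z} → D := fun v => f v.1

/-- Projection of a relation onto the attribute set `Z`. -/
def proj {ι D : Type*} [Fintype ι] [DecidableEq ι] [DecidableEq D]
    (P : Finset (ι → D)) (Z : Finset ι) : Finset ({v // v ∈ Z} → D) :=
  P.image (fun f => restr f Z)

/-- A relation is totally uniform if every marginal of the uniform distribution on it is
uniform, i.e. all fibers of every projection have the same size `|P| / |Π_Z(P)|`. -/
def TotallyUniform {ι D : Type*} [Fintype ι] [DecidableEq ι] [DecidableEq D]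
    (P : Finset (ι → D)) : Prop :=
  ∀ (Z : Finset ι) (g : {v // v ∈ Z} → D), g ∈ proj P Z →
    (P.filter (fun f => restr f Z = g)).card * (proj P Z).card = P.card

/-- Merge two tuples over `X` and `Y` into a tuple over `X ∪ Y` (preferring the first). -/
def merge {V D : Type*} [DecidableEq V] (X Y : Finset V)
    (f : {v // v ∈ X} → D) (g : {v // v ∈ Y} → D) : {v // v ∈ X ∪ Y} → D :=
  fun v =>
    if h : v.1 ∈ X then f ⟨v.1, h⟩
    else g ⟨v.1, (Finset.mem_union.mp v.2).resolve_left h⟩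

/-- The natural join of `P1 ⊆ D^X` and `P2 ⊆ D^Y`: all tuples over `X ∪ Y` whose projections
to `X` and `Y` lie in `P1` and `P2` respectively. -/
def natJoin {V D : Type*} [Fintype V] [DecidableEq V] [DecidableEq D] (X Y : Finset V)
    (P1 : Finset ({v // v ∈ X} → D)) (P2 : Finset ({v // v ∈ Y} → D)) :
    Finset ({v // v ∈ X ∪ Y} → D) :=
  ((P1 ×ˢ P2).image (fun fg => merge X Y fg.1 fg.2)).filter
    (fun h =>
      (fun v : {v // v ∈ X} => h ⟨v.1, Finset.mem_union_left Y v.2⟩) ∈ P1 ∧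
      (fun v : {v // v ∈ Y} => h ⟨v.1, Finset.mem_union_right X v.2⟩) ∈ P2)

/-- The join bound: if `P2` is totally uniform, then
`|P1 ⋈ P2| ≤ |P1| · deg_{P2}(Y | X ∩ Y)` where
`deg_{P2}(Y | X ∩ Y) = |Π_{(X∩Y)∪Y}(P2)| / |Π_{X∩Y}(P2)|`. -/
theorem join_card_le {V D : Type*} [Fintype V] [DecidableEq V] [DecidableEq D]
    (X Y : Finset V)
    (P1 : Finset ({v // v ∈ X} → D)) (P2 : Finset ({v // v ∈ Y} → D))
    (hu : TotallyUniform P2) :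
    ((natJoin X Y P1 P2).card : ℝ) ≤
      (P1.card : ℝ) *
        (((proj P2 (Finset.univ : Finset {v // v ∈ Y})).card : ℝ) /
          ((proj P2 (Finset.univ.filter (fun v : {v // v ∈ Y} => v.1 ∈ X))).card : ℝ)) := by
  classical
  have hproj : (proj P2 (Finset.univ : Finset {v // v ∈ Y})).card = P2.card := by
    unfold proj
    apply Finset.card_image_of_injective
    intro f g h
    funext v
    exact congrFun h ⟨v, Finset.mem_univ v⟩
  by_cases hP2 : P2 = ∅
  · simp [natJoin, hP2, proj]
    positivity
  · set Z : Finset {v // v ∈ Y} := Finset.univ.filter (fun v : {v // v ∈ Y} => v.1 ∈ X)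
      with hZdef
    set m := (proj P2 Z).card with hm
    have hmpos : 0 < m := by
      rw [hm]
      unfold proj
      rw [Finset.card_pos]
      obtain ⟨f, hf⟩ := Finset.nonempty_iff_ne_empty.mpr hP2
      exact ⟨_, Finset.mem_image_of_mem _ hf⟩
    -- the trace of a tuple over X on the intersection
    have hmemX : ∀ z : {x // x ∈ Z}, z.1.1 ∈ X := fun z =>
      (Finset.mem_filter.mp z.2).2
    set gOf : ({v // v ∈ X} → D) → ({z // z ∈ Z} → D) :=
      fun f1 z => f1 ⟨z.1.1, hmemX z⟩ with hgOf
    set fib : ({v // v ∈ X} → D) → Finset ({v // v ∈ Y} → D) :=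
      fun f1 => P2.filter (fun f2 => restr f2 Z = gOf f1) with hfib
    have hfibcard : ∀ f1, (fib f1).card * m ≤ P2.card := by
      intro f1
      rcases Finset.eq_empty_or_nonempty (fib f1) with he | ⟨f2, hf2⟩
      · simp [he]
      · have hf2' := Finset.mem_filter.mp hf2
        have hg : gOf f1 ∈ proj P2 Z := by
          rw [← hf2'.2]
          exact Finset.mem_image_of_mem _ hf2'.1
        exact le_of_eq (hu Z (gOf f1) hg)
    -- subset into a biUnion
    have hsub : natJoin X Y P1 P2 ⊆
        P1.biUnion (fun f1 => (fib f1).image (merge X Y f1)) := by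
      intro h hh
      rw [natJoin, Finset.mem_filter] at hh
      obtain ⟨-, h1, h2⟩ := hh
      set f1 : {v // v ∈ X} → D := fun v => h ⟨v.1, Finset.mem_union_left Y v.2⟩
      set f2 : {v // v ∈ Y} → D := fun v => h ⟨v.1, Finset.mem_union_right X v.2⟩
      refine Finset.mem_biUnion.mpr ⟨f1, h1, Finset.mem_image.mpr ⟨f2, ?_, ?_⟩⟩
      · refine Finset.mem_filter.mpr ⟨h2, ?_⟩
        funext z
        show h ⟨z.1.1, _⟩ = h ⟨z.1.1, _⟩
        congr 1
      · funext v
        unfold merge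
        split
        · show h _ = h v; congr 1
        · show h _ = h v; congr 1
    have key : (natJoin X Y P1 P2).card * m ≤ P1.card * P2.card := by
      calc (natJoin X Y P1 P2).card * m
          ≤ (P1.biUnion (fun f1 => (fib f1).image (merge X Y f1))).card * m :=
            Nat.mul_le_mul_right m (Finset.card_le_card hsub)
        _ ≤ (∑ f1 ∈ P1, ((fib f1).image (merge X Y f1)).card) * m :=
            Nat.mul_le_mul_right m (Finset.card_biUnion_le)
        _ ≤ (∑ f1 ∈ P1, (fib f1).card) * m := by
            gcongr with f1 hf1
            exact Finset.card_image_le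
        _ = ∑ f1 ∈ P1, (fib f1).card * m := by rw [Finset.sum_mul]
        _ ≤ ∑ f1 ∈ P1, P2.card := Finset.sum_le_sum (fun f1 _ => hfibcard f1)
        _ = P1.card * P2.card := by rw [Finset.sum_const, smul_eq_mul]
    have hmR : (0:ℝ) < (m:ℝ) := by exact_mod_cast hmpos
    rw [hproj, ← mul_div_assoc, le_div_iff₀ hmR]
    exact_mod_cast key
end

section
/- Let K ⊆ ℝ^N be a closed convex cone and y_1, ..., y_m ∈ ℝ^N. Then the following are equivalent: (1) for all x ∈ K, max_i ⟨x, y_i⟩ ≥ 0; (2) there exist λ_1, ..., λ_m ≥ 0 with Σ_i λ_i = 1 such that ⟨x, Σ_i λ_i y_i⟩ ≥ 0 for all x ∈ K. -/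
open RealInnerProductSpace

private lemma sum_mul_swap {N m : ℕ} (x : Fin N → ℝ) (lam : Fin m → ℝ)
    (y : Fin m → Fin N → ℝ) :
    ∑ j, x j * ∑ i, lam i * y i j = ∑ i, lam i * ∑ j, x j * y i j := by
  calc ∑ j, x j * ∑ i, lam i * y i j
      = ∑ j, ∑ i, x j * (lam i * y i j) := by
        exact Finset.sum_congr rfl fun j _ => Finset.mul_sum _ _ _
    _ = ∑ i, ∑ j, x j * (lam i * y i j) := Finset.sum_comm
    _ = ∑ i, lam i * ∑ j, x j * y i j := by
        refine Finset.sum_congr rfl fun i _ => ?_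
        rw [Finset.mul_sum]
        exact Finset.sum_congr rfl fun j _ => by ring

/-- For a closed convex cone `K` and vectors `y_1, ..., y_m`:
`max_i ⟨x, y_i⟩ ≥ 0` for all `x ∈ K` iff some convex combination `Σ λ_i y_i` lies in the
dual cone of `K`. -/
theorem cone_max_theorem {N m : ℕ} (hm : 0 < m) (K : Set (Fin N → ℝ))
    (hKclosed : IsClosed K) (hKconvex : Convex ℝ K)
    (hKcone : ∀ x ∈ K, ∀ c : ℝ, 0 ≤ c → c • x ∈ K)
    (y : Fin m → Fin N → ℝ) :
    (∀ x ∈ K, ∃ i : Fin m, 0 ≤ ∑ j, x j * y i j) ↔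
      (∃ lam : Fin m → ℝ, (∀ i, 0 ≤ lam i) ∧ (∑ i, lam i = 1) ∧
        ∀ x ∈ K, 0 ≤ ∑ j, x j * (∑ i, lam i * y i j)) := by
  constructor
  · intro h
    rcases K.eq_empty_or_nonempty with hKe | ⟨x0, hx0⟩
    · refine ⟨fun _ => (m : ℝ)⁻¹, fun i => by positivity, ?_, by simp [hKe]⟩
      simp only [Finset.sum_const, Finset.card_univ, Fintype.card_fin, nsmul_eq_mul]
      field_simp
    · have h0K : (0 : Fin N → ℝ) ∈ K := by simpa using hKcone x0 hx0 0 le_rfl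
      -- Work in EuclideanSpace
      let K' : Set (EuclideanSpace ℝ (Fin N)) := WithLp.ofLp ⁻¹' K
      let y' : Fin m → EuclideanSpace ℝ (Fin N) := fun i => WithLp.toLp 2 (y i)
      -- K' as a convex cone
      let Kc : ConvexCone ℝ (EuclideanSpace ℝ (Fin N)) :=
        { carrier := K'
          smul_mem' := fun c hc x hx => hKcone _ hx c hc.le
          add_mem' := fun x hx z hz => by
            have h1 : (1 / 2 : ℝ) • x.ofLp + (1 / 2 : ℝ) • z.ofLp ∈ K :=
              hKconvex hx hz (by norm_num) (by norm_num) (by norm_num)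
            have h2 := hKcone _ h1 2 (by norm_num)
            have heq : (2 : ℝ) • ((1 / 2 : ℝ) • x.ofLp + (1 / 2 : ℝ) • z.ofLp) = WithLp.ofLp (x + z) := by
              rw [smul_add, smul_smul, smul_smul]; norm_num
            rwa [heq] at h2 }
      have hKcClosed : IsClosed (Kc : Set (EuclideanSpace ℝ (Fin N))) :=
        show IsClosed ((WithLp.ofLp : EuclideanSpace ℝ (Fin N) → Fin N → ℝ) ⁻¹' K) from
          hKclosed.preimage (by fun_prop)
      have hKcNe : (Kc : Set (EuclideanSpace ℝ (Fin N))).Nonempty :=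
        ⟨0, show WithLp.ofLp (0 : EuclideanSpace ℝ (Fin N)) ∈ K by simpa using h0K⟩
      let Pc : ProperCone ℝ (EuclideanSpace ℝ (Fin N)) :=
        ⟨Kc.toPointedCone (ConvexCone.Pointed.of_nonempty_of_isClosed hKcNe hKcClosed), hKcClosed⟩
      -- Linear map from simplex weights
      let T : (Fin m → ℝ) →ₗ[ℝ] EuclideanSpace ℝ (Fin N) :=
        { toFun := fun lam => ∑ i, lam i • y' i
          map_add' := by
            intro a b
            simp [add_smul, Finset.sum_add_distrib]
          map_smul' := by
            intro c a
            simp [smul_smul, Finset.smul_sum] }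
      let C : Set (EuclideanSpace ℝ (Fin N)) := T '' stdSimplex ℝ (Fin m)
      have hCcomp : IsCompact C := (isCompact_stdSimplex _ _).image T.continuous_of_finiteDimensional
      have hCconv : Convex ℝ C := (convex_stdSimplex ℝ (Fin m)).linear_image T
      let D := ProperCone.innerDual K'
      have hmain : ¬ Disjoint C (D : Set (EuclideanSpace ℝ (Fin N))) := by
        intro hdisj
        obtain ⟨f, u, v, hfu, huv, hfv⟩ :=
          geometric_hahn_banach_compact_closed hCconv hCcomp D.convex
            D.isClosed hdisj
        have hv0 : v < 0 := by
          have := hfv 0 (zero_mem D)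
          simpa using this
        have hfD : ∀ b ∈ D, 0 ≤ f b := by
          intro b hb
          by_contra hneg
          push_neg at hneg
          have ht : (0 : ℝ) < v / f b := div_pos_of_neg_of_neg hv0 hneg
          have hb' : (v / f b) • b ∈ D := D.smul_mem hb ht.le
          have := hfv _ hb'
          rw [map_smul, smul_eq_mul, div_mul_cancel₀ v (ne_of_lt hneg)] at this
          exact lt_irrefl v this
        -- the separating functional comes from a vector x ∈ K
        set x : EuclideanSpace ℝ (Fin N) := (InnerProductSpace.toDual ℝ _).symm f with hx
        have hinner : ∀ b : EuclideanSpace ℝ (Fin N), ⟪x, b⟫ = f b := fun b =>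
          InnerProductSpace.toDual_symm_apply
        have hxK : x ∈ K' := by
          have hxdd : x ∈ ProperCone.innerDual (ProperCone.innerDual (Pc : Set (EuclideanSpace ℝ (Fin N))) :
              Set (EuclideanSpace ℝ (Fin N))) := by
            rw [ProperCone.mem_innerDual]
            intro b hb
            rw [real_inner_comm, hinner]
            exact hfD b hb
          rw [ProperCone.innerDual_innerDual] at hxdd
          exact hxdd
        obtain ⟨i, hi⟩ := h x.ofLp hxK
        have hyiC : y' i ∈ C := by
          refine ⟨Pi.single i 1, single_mem_stdSimplex ℝ i, ?_⟩
          show (∑ k, Pi.single i 1 k • y' k) = y' i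
          rw [Finset.sum_eq_single i]
          · simp
          · intro k _ hk
            simp [Pi.single_apply, hk]
          · simp
        have hlt : f (y' i) < u := hfu _ hyiC
        have hfyi : f (y' i) = ∑ j, x j * y i j := by
          rw [← hinner]
          simp [y', PiLp.inner_apply, RCLike.inner_apply, mul_comm]
        linarith [hi, hfyi ▸ hlt, huv, hv0]
      rw [Set.not_disjoint_iff] at hmain
      obtain ⟨z, ⟨lam, hlam, hTz⟩, hzD⟩ := hmain
      refine ⟨lam, hlam.1, hlam.2, ?_⟩
      intro x hxK
      let x' : EuclideanSpace ℝ (Fin N) := WithLp.toLp 2 x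
      have hz : (0 : ℝ) ≤ ⟪x', z⟫ :=
        ProperCone.mem_innerDual.mp hzD (show x' ∈ K' from hxK)
      have hinz : ⟪x', z⟫ = ∑ i, lam i * ∑ j, x j * y i j := by
        rw [← hTz]
        show ⟪x', ∑ i, lam i • y' i⟫ = _
        rw [inner_sum]
        refine Finset.sum_congr rfl fun i _ => ?_
        rw [real_inner_smul_right]
        have : ⟪x', y' i⟫ = ∑ j, x j * y i j := by
          simp [x', y', PiLp.inner_apply, RCLike.inner_apply, mul_comm]
        rw [this]
      rw [sum_mul_swap]
      rw [hinz] at hz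
      exact hz
  · rintro ⟨lam, hlam0, hlam1, hlam⟩ x hxK
    by_contra hall
    push_neg at hall
    have hsum := hlam x hxK
    rw [sum_mul_swap] at hsum
    obtain ⟨i0, _, hi0⟩ := Finset.exists_ne_zero_of_sum_ne_zero (by rw [hlam1]; norm_num :
      ∑ i, lam i ≠ 0)
    have hi0pos : 0 < lam i0 := (hlam0 i0).lt_of_ne (Ne.symm hi0)
    have hneg : ∑ i, lam i * ∑ j, x j * y i j < 0 := by
      have hle : ∀ i ∈ Finset.univ, lam i * ∑ j, x j * y i j ≤ 0 := fun i _ =>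
        mul_nonpos_of_nonneg_of_nonpos (hlam0 i) (hall i).le
      have hlt : lam i0 * ∑ j, x j * y i0 j < 0 :=
        mul_neg_of_pos_of_neg hi0pos (hall i0)
      calc ∑ i, lam i * ∑ j, x j * y i j
          < ∑ i : Fin m, (0 : ℝ) := Finset.sum_lt_sum hle ⟨i0, Finset.mem_univ _, hlt⟩
        _ = 0 := by simp
    linarith
end

section
/- Let K = {x ∈ ℝ^N : Ax ≥ 0} be a polyhedral cone given by a real P×N matrix A, and let y_1, ..., y_m ∈ ℝ^N. If max_{i∈[m]} ⟨x, y_i⟩ ≥ 0 for all x ∈ K, then there exist λ_1, ..., λ_m ≥ 0 with Σ_i λ_i = 1 and μ ∈ ℝ^P with μ ≥ 0 such that Σ_i λ_i y_i = Aᵀ μ; in particular ⟨x, Σ_i λ_i y_i⟩ ≥ 0 for all x ∈ K. -/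
open Finset

/-- Cone Carathéodory: a nonneg combination can be rewritten with support a
linearly independent subfamily. -/
lemma cone_caratheodory {P N : ℕ} (v : Fin P → (Fin N → ℝ)) :
    ∀ (n : ℕ) (μ : Fin P → ℝ), (Finset.univ.filter fun p => μ p ≠ 0).card ≤ n →
    (∀ p, 0 ≤ μ p) →
    ∃ (s : Finset (Fin P)) (μ' : Fin P → ℝ),
      LinearIndependent ℝ (fun p : s => v p) ∧ (∀ p, 0 ≤ μ' p) ∧
      (∀ p ∉ s, μ' p = 0) ∧ ∑ p, μ' p • v p = ∑ p, μ p • v p := by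
  intro n
  induction n with
  | zero =>
    intro μ hcard _
    have hz : ∀ p, μ p = 0 := by
      intro p
      by_contra h
      have : p ∈ Finset.univ.filter fun p => μ p ≠ 0 := by simp [h]
      have := Finset.card_pos.mpr ⟨p, this⟩
      omega
    exact ⟨∅, μ, linearIndependent_empty_type, fun p => (hz p).ge, fun p _ => hz p, rfl⟩
  | succ n ih =>
    intro μ hcard hμ
    set s : Finset (Fin P) := Finset.univ.filter fun p => μ p ≠ 0 with hs
    by_cases hLI : LinearIndependent ℝ (fun p : s => v p)
    · exact ⟨s, μ, hLI, hμ, fun p hp => by simpa [hs] using hp, rfl⟩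
    · -- get a nontrivial relation supported in s
      obtain ⟨g, hg0, i0, hgi0⟩ := Fintype.not_linearIndependent_iff.mp hLI
      classical
      set d : Fin P → ℝ := fun p => if h : p ∈ s then g ⟨p, h⟩ else 0 with hd
      have hd_supp : ∀ p ∉ s, d p = 0 := fun p hp => by simp [hd, hp]
      have hd_sum : ∑ p, d p • v p = 0 := by
        rw [← Finset.sum_subset (Finset.subset_univ s)
          (fun p _ hp => by simp [hd_supp p hp])]
        rw [← Finset.sum_coe_sort s (fun p => d p • v p)]
        calc ∑ p : s, d (p : Fin P) • v p = ∑ p : s, g p • v p := by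
              refine Finset.sum_congr rfl fun p _ => ?_
              simp [hd, p.2]
          _ = 0 := hg0
      have hd_ne : d (i0 : Fin P) ≠ 0 := by simpa [hd, i0.2] using hgi0
      -- key step, applied to d or -d
      have key : ∀ e : Fin P → ℝ, (∀ p ∉ s, e p = 0) → ∑ p, e p • v p = 0 →
          (∃ p, 0 < e p) →
          ∃ (s' : Finset (Fin P)) (μ' : Fin P → ℝ),
            LinearIndependent ℝ (fun p : s' => v p) ∧ (∀ p, 0 ≤ μ' p) ∧
            (∀ p ∉ s', μ' p = 0) ∧ ∑ p, μ' p • v p = ∑ p, μ p • v p := by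
        intro e he_supp he_sum ⟨q, hq⟩
        set T : Finset (Fin P) := Finset.univ.filter fun p => 0 < e p with hT
        have hTne : T.Nonempty := ⟨q, by simp [hT, hq]⟩
        obtain ⟨p0, hp0T, hp0min⟩ := T.exists_min_image (fun p => μ p / e p) hTne
        have hep0 : 0 < e p0 := by simpa [hT] using hp0T
        set t : ℝ := μ p0 / e p0 with ht
        have ht0 : 0 ≤ t := div_nonneg (hμ p0) hep0.le
        set μ' : Fin P → ℝ := fun p => μ p - t * e p with hμ'
        have hμ'_nonneg : ∀ p, 0 ≤ μ' p := by
          intro p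
          by_cases hp : 0 < e p
          · have := hp0min p (by simp [hT, hp])
            have : t * e p ≤ μ p := by
              rw [ht, div_le_div_iff₀ hep0 hp] at this
              rw [ht, div_mul_eq_mul_div, div_le_iff₀ hep0]
              exact this
            simpa [hμ'] using this
          · push_neg at hp
            have : t * e p ≤ 0 := mul_nonpos_of_nonneg_of_nonpos ht0 hp
            have := hμ p
            simp only [hμ']; linarith
        have hμ'p0 : μ' p0 = 0 := by
          simp only [hμ', ht]
          field_simp
          ring
        have hμ'_supp : ∀ p ∉ s, μ' p = 0 := by
          intro p hp
          have h1 : μ p = 0 := by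
            by_contra h; exact hp (by simp [hs, h])
          simp [hμ', h1, he_supp p hp]
        have hsub : (Finset.univ.filter fun p => μ' p ≠ 0) ⊆ s.erase p0 := by
          intro p hp
          simp only [Finset.mem_filter] at hp
          refine Finset.mem_erase.mpr ⟨?_, ?_⟩
          · rintro rfl; exact hp.2 hμ'p0
          · by_contra h; exact hp.2 (hμ'_supp p h)
        have hp0s : p0 ∈ s := by
          by_contra h
          exact absurd (he_supp p0 h) hep0.ne'
        have hcard' : (Finset.univ.filter fun p => μ' p ≠ 0).card ≤ n := by
          have h1 := Finset.card_le_card hsub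
          have h2 : (s.erase p0).card = s.card - 1 := Finset.card_erase_of_mem hp0s
          have h3 : 0 < s.card := Finset.card_pos.mpr ⟨p0, hp0s⟩
          omega
        obtain ⟨s', μ'', hLI', h1, h2, h3⟩ := ih μ' hcard' hμ'_nonneg
        refine ⟨s', μ'', hLI', h1, h2, ?_⟩
        rw [h3]
        have : ∑ p, μ' p • v p = ∑ p, μ p • v p - t • ∑ p, e p • v p := by
          rw [Finset.smul_sum, ← Finset.sum_sub_distrib]
          refine Finset.sum_congr rfl fun p _ => ?_
          simp [hμ', sub_smul, smul_smul]
        rw [this, he_sum, smul_zero, sub_zero]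
      rcases lt_trichotomy (d i0) 0 with hneg | hzero | hpos
      · refine key (-d) (fun p hp => by simp [hd_supp p hp]) ?_ ⟨i0, by simpa using hneg⟩
        simp only [Pi.neg_apply, neg_smul, Finset.sum_neg_distrib, hd_sum, neg_zero]
      · exact absurd hzero hd_ne
      · exact key d hd_supp hd_sum ⟨i0, hpos⟩


/-- A finitely generated cone in `Fin N → ℝ` is closed. -/
lemma isClosed_finitely_generated_cone {P N : ℕ} (v : Fin P → (Fin N → ℝ)) :
    IsClosed {z : Fin N → ℝ | ∃ μ : Fin P → ℝ, (∀ p, 0 ≤ μ p) ∧ z = ∑ p, μ p • v p} := by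
  classical
  set Cs : Finset (Fin P) → Set (Fin N → ℝ) := fun s =>
    {z | ∃ μ : Fin P → ℝ, (∀ p, 0 ≤ μ p) ∧ (∀ p ∉ s, μ p = 0) ∧ z = ∑ p, μ p • v p} with hCs
  have hclosed : ∀ s : Finset (Fin P), LinearIndependent ℝ (fun p : s => v p) →
      IsClosed (Cs s) := by
    intro s hLI
    set L : (↥s → ℝ) →ₗ[ℝ] (Fin N → ℝ) :=
      { toFun := fun c => ∑ p : s, c p • v p
        map_add' := by
          intro a b
          simp [add_smul, Finset.sum_add_distrib]
        map_smul' := by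
          intro r a
          simp [smul_smul, Finset.smul_sum] } with hL
    have hker : LinearMap.ker L = ⊥ := by
      rw [LinearMap.ker_eq_bot']
      intro c hc
      exact funext (Fintype.linearIndependent_iff.mp hLI c hc)
    have hemb : Topology.IsClosedEmbedding L := LinearMap.isClosedEmbedding_of_injective hker
    have himg : Cs s = L '' {c | ∀ p, 0 ≤ c p} := by
      ext z
      constructor
      · rintro ⟨μ, hμ0, hμs, rfl⟩
        refine ⟨fun p => μ p, fun p => hμ0 p, ?_⟩
        show ∑ p : s, μ (p : Fin P) • v p = _
        rw [Finset.sum_coe_sort s (fun p => μ p • v p)]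
        exact Finset.sum_subset (Finset.subset_univ s)
          (fun p _ hp => by simp [hμs p hp])
      · rintro ⟨c, hc, rfl⟩
        refine ⟨fun p => if h : p ∈ s then c ⟨p, h⟩ else 0, ?_, ?_, ?_⟩
        · intro p
          by_cases h : p ∈ s
          · simpa [h] using hc ⟨p, h⟩
          · simp [h]
        · intro p hp; simp [hp]
        · show (∑ p : ↥s, c p • v ↑p) = ∑ p : Fin P, (if h : p ∈ s then c ⟨p, h⟩ else 0) • v p
          rw [← Finset.sum_subset (Finset.subset_univ s)
            (fun p _ hp => by simp [hp]),
            ← Finset.sum_coe_sort s (fun p => (if h : p ∈ s then c ⟨p, h⟩ else 0) • v p)]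
          exact (Finset.sum_congr rfl fun p _ => by simp [p.2]).symm
    rw [himg]
    refine hemb.isClosedMap _ ?_
    have : {c : ↥s → ℝ | ∀ p, 0 ≤ c p} = ⋂ p : s, {c | 0 ≤ c p} := by
      ext c; simp [Set.mem_iInter]
    rw [this]
    exact isClosed_iInter fun p => isClosed_le continuous_const (continuous_apply p)
  classical
  have hunion : {z : Fin N → ℝ | ∃ μ : Fin P → ℝ, (∀ p, 0 ≤ μ p) ∧ z = ∑ p, μ p • v p} =
      ⋃ s : Finset (Fin P),
        (if LinearIndependent ℝ (fun p : s => v p) then Cs s else ∅) := by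
    ext z
    simp only [Set.mem_iUnion, Set.mem_setOf_eq]
    constructor
    · rintro ⟨μ, hμ0, rfl⟩
      obtain ⟨s, μ', hLI, h1, h2, h3⟩ := cone_caratheodory v P μ
        (le_trans (Finset.card_filter_le _ _) (by simp)) hμ0
      exact ⟨s, by rw [if_pos hLI]; exact ⟨μ', h1, h2, h3.symm⟩⟩
    · rintro ⟨s, hz⟩
      by_cases hLI : LinearIndependent ℝ (fun p : s => v p)
      · rw [if_pos hLI] at hz
        obtain ⟨μ, h1, _, h3⟩ := hz
        exact ⟨μ, h1, h3⟩
      · rw [if_neg hLI] at hz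
        exact absurd hz (Set.notMem_empty z)
  rw [hunion]
  refine isClosed_iUnion_of_finite fun s => ?_
  by_cases hLI : LinearIndependent ℝ (fun p : s => v p)
  · rw [if_pos hLI]; exact hclosed s hLI
  · rw [if_neg hLI]; exact isClosed_empty

/-- The polyhedral case of the cone max theorem: if `max_i ⟨x, y_i⟩ ≥ 0` on the
polyhedral cone `{x : Ax ≥ 0}`, then there are convex multipliers `λ` and non-negative
`μ` with `Σ_i λ_i y_i = Aᵀ μ`; in particular `⟨x, Σ_i λ_i y_i⟩ ≥ 0` on the cone. -/
theorem polyhedral_cone_max_theorem {P N m : ℕ} (hm : 0 < m)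
    (A : Matrix (Fin P) (Fin N) ℝ) (y : Fin m → Fin N → ℝ)
    (hyp : ∀ x : Fin N → ℝ, (∀ p, 0 ≤ ∑ j, A p j * x j) →
      ∃ i : Fin m, 0 ≤ ∑ j, x j * y i j) :
    ∃ (lam : Fin m → ℝ) (mu : Fin P → ℝ),
      (∀ i, 0 ≤ lam i) ∧ (∑ i, lam i = 1) ∧ (∀ p, 0 ≤ mu p) ∧
      (∀ j, ∑ i, lam i * y i j = ∑ p, mu p * A p j) ∧
      ∀ x : Fin N → ℝ, (∀ p, 0 ≤ ∑ j, A p j * x j) →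
        0 ≤ ∑ j, x j * ∑ i, lam i * y i j := by
  classical
  set v : Fin P → (Fin N → ℝ) := fun p j => A p j with hv
  set D : Set (Fin N → ℝ) :=
    {z | ∃ μ : Fin P → ℝ, (∀ p, 0 ≤ μ p) ∧ z = ∑ p, μ p • v p} with hD
  set Ly : (Fin m → ℝ) →ₗ[ℝ] (Fin N → ℝ) :=
    { toFun := fun lam => ∑ i, lam i • y i
      map_add' := by intro a b; simp [add_smul, Finset.sum_add_distrib]
      map_smul' := by intro r a; simp [smul_smul, Finset.smul_sum] } with hLy
  set S : Set (Fin N → ℝ) := Ly '' stdSimplex ℝ (Fin m) with hS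
  have hDconv : Convex ℝ D := by
    rintro z1 ⟨μ1, hμ1, rfl⟩ z2 ⟨μ2, hμ2, rfl⟩ a b ha hb hab
    refine ⟨fun p => a * μ1 p + b * μ2 p,
      fun p => add_nonneg (mul_nonneg ha (hμ1 p)) (mul_nonneg hb (hμ2 p)), ?_⟩
    rw [Finset.smul_sum, Finset.smul_sum, ← Finset.sum_add_distrib]
    refine Finset.sum_congr rfl fun p _ => ?_
    simp [add_smul, mul_smul]
  have hDclosed : IsClosed D := isClosed_finitely_generated_cone v
  have hSconv : Convex ℝ S := (convex_stdSimplex ℝ (Fin m)).linear_image Ly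
  have hScomp : IsCompact S :=
    (isCompact_stdSimplex _ (Fin m)).image Ly.continuous_of_finiteDimensional
  have hmeet : ¬ Disjoint S D := by
    intro hdisj
    obtain ⟨f, u, w, h1, h2, h3⟩ :=
      geometric_hahn_banach_compact_closed hSconv hScomp hDconv hDclosed hdisj
    have h0D : (0 : Fin N → ℝ) ∈ D := ⟨0, fun p => le_refl 0, by simp⟩
    have hw0 : w < 0 := by simpa using h3 0 h0D
    have hfD : ∀ b ∈ D, 0 ≤ f b := by
      intro b hb
      by_contra hfb
      push_neg at hfb
      have hbne : f b ≠ 0 := hfb.ne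
      set t : ℝ := w / f b + 1 with ht
      have ht0 : 0 ≤ t := by
        have h := div_pos_of_neg_of_neg hw0 hfb
        rw [ht]; linarith
      have htb : t • b ∈ D := by
        obtain ⟨μ, hμ0, rfl⟩ := hb
        refine ⟨fun p => t * μ p, fun p => mul_nonneg ht0 (hμ0 p), ?_⟩
        rw [Finset.smul_sum]
        exact Finset.sum_congr rfl fun p _ => (mul_smul t (μ p) (v p)).symm
      have hlt := h3 _ htb
      rw [map_smul, smul_eq_mul] at hlt
      have heq : t * f b = w + f b := by
        rw [ht, add_mul, one_mul, div_mul_cancel₀ w hbne]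
      linarith
    set x : Fin N → ℝ := fun j => f (Pi.single j 1) with hx
    have hrep : ∀ z : Fin N → ℝ, f z = ∑ j, z j * x j := by
      intro z
      conv_lhs => rw [pi_eq_sum_univ z]
      rw [map_sum]
      refine Finset.sum_congr rfl fun j _ => ?_
      rw [map_smul, smul_eq_mul]
      congr 1
      show f _ = f (Pi.single j 1)
      congr 1
      ext k
      simp [Pi.single_apply, eq_comm]
    have hxK : ∀ p, 0 ≤ ∑ j, A p j * x j := by
      intro p
      have hvD : v p ∈ D := by
        refine ⟨Pi.single p 1, fun q => ?_, ?_⟩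
        · by_cases hq : q = p <;> simp [Pi.single_apply, hq]
        · simp [Pi.single_apply, ite_smul]
      have h := hfD _ hvD
      rw [hrep] at h
      simpa [hv] using h
    obtain ⟨i, hi⟩ := hyp x hxK
    have hyS : y i ∈ S := by
      refine ⟨Pi.single i 1, ⟨fun k => ?_, ?_⟩, ?_⟩
      · by_cases hk : k = i <;> simp [Pi.single_apply, hk]
      · simp [Pi.single_apply]
      · show (∑ k, (Pi.single i 1 : Fin m → ℝ) k • y k) = y i
        simp [Pi.single_apply, ite_smul]
    have hfy : 0 ≤ f (y i) := by
      rw [hrep]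
      calc (0:ℝ) ≤ ∑ j, x j * y i j := hi
        _ = ∑ j, y i j * x j := Finset.sum_congr rfl fun j _ => mul_comm _ _
    have := h1 _ hyS
    linarith
  rw [Set.not_disjoint_iff] at hmeet
  obtain ⟨z, ⟨lam, hlam, hLz⟩, ⟨mu, hmu, hDz⟩⟩ := hmeet
  have hEq : ∀ j, ∑ i, lam i * y i j = ∑ p, mu p * A p j := by
    intro j
    have h := congrFun (hLz.trans hDz) j
    simpa [hLy, hv, Finset.sum_apply] using h
  refine ⟨lam, mu, hlam.1, hlam.2, hmu, hEq, ?_⟩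
  intro x hx
  calc (0:ℝ) ≤ ∑ p, mu p * ∑ j, A p j * x j :=
        Finset.sum_nonneg fun p _ => mul_nonneg (hmu p) (hx p)
    _ = ∑ j, x j * ∑ p, mu p * A p j := by
        simp_rw [Finset.mul_sum]
        rw [Finset.sum_comm]
        exact Finset.sum_congr rfl fun j _ => Finset.sum_congr rfl fun p _ => by ring
    _ = ∑ j, x j * ∑ i, lam i * y i j := by
        exact Finset.sum_congr rfl fun j _ => by rw [hEq j]
end
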